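/- For every ε > 0, m ≥ 0, and (x,t) ∈ εℤ² such that t > |x| and (x+t)/ε is even: a₁(x,t,m,ε) = (1+m²ε²)^((1−t/ε)/2) · Σ_{r=0}^{(t−|x|)/2ε} (−1)^r · C((t+x−2ε)/2ε, r) · C((t−x−2ε)/2ε, r) · (mε)^(2r+1), and a₂(x,t,m,ε) = (1+m²ε²)^((1−t/ε)/2) · Σ_{r=1}^{(t−|x|)/2ε} (−1)^r · C((t+x−2ε)/2ε, r) · C((t−x−2ε)/2ε, r−1) · (mε)^(2r), where C(n,k) denotes the binomial coefficient. -/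

import Mathlib

noncomputable section

/-- The `i`-th move of a checker path encoded as `f : Fin n → Bool`
(`true` = upwards-right move `(ε,ε)`, `false` = upwards-left move `(−ε,ε)`);
out-of-range indices default to `true`. -/
def fcStep {n : ℕ} (f : Fin n → Bool) (i : ℕ) : Bool :=
  if h : i < n then f ⟨i, h⟩ else true

/-- The number of turns of the checker path `f`. -/
def fcTurns {n : ℕ} (f : Fin n → Bool) : ℕ :=
  ((Finset.range (n - 1)).filter fun i => fcStep f i ≠ fcStep f (i + 1)).card

/-- The position (in units of `ε`) of the checker path `f` after `i` moves,
starting from the origin. -/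
def fcPos {n : ℕ} (f : Fin n → Bool) (i : ℕ) : ℤ :=
  ∑ j ∈ Finset.range i, (if fcStep f j then (1 : ℤ) else -1)

/-- Checker paths from `(0,0)` to `(εx, εn)` whose first step is to `(ε,ε)`. -/
def fcPaths (n : ℕ) (x : ℤ) : Finset (Fin n → Bool) :=
  Finset.univ.filter fun f =>
    (∀ i : Fin n, (i : ℕ) = 0 → f i = true) ∧ fcPos f n = x

/-- The amplitude `a(εx, εn, m, ε)`. -/
def fcAmp (m ε : ℝ) (x : ℤ) (n : ℕ) : ℂ :=
  (((1 + m ^ 2 * ε ^ 2) ^ ((1 - (n : ℝ)) / 2) : ℝ) : ℂ) * Complex.I *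
    ∑ f ∈ fcPaths n x, (-Complex.I * (m * ε)) ^ fcTurns f

/-- The probability `P(εx, εn, m, ε)` to find the electron at `(εx, εn)`. -/
def fcP (m ε : ℝ) (x : ℤ) (n : ℕ) : ℝ := ‖fcAmp m ε x n‖ ^ 2

/-!
Group the checker paths by their last move. Deleting the last move changes the number of turns
by one exactly when the last two moves differ, so the sums of `w ^ turns` over the paths ending
with a given move satisfy a two-term recursion in the length, a lattice Dirac equation.
A path with `p + 1` right and `q` left moves that ends with a right move is made of `r + 1` right
runs alternating with `r` left runs, so the sum over such paths is
`∑ r, C(p, r) * #{compositions of q into r parts} * w ^ (2r)`; a path ending with a left move has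
`r + 1` runs of each kind and weight `w ^ (2r + 1)`. The recursion verifies these closed forms by
Pascal's rule. For `w = -i m ε` the even powers of `w` are real and the odd ones imaginary, which
separates `a₁` from `a₂`.
-/

open Finset

section Paths

variable {n : ℕ}

lemma fcStep_snoc_of_lt (g : Fin n → Bool) (b : Bool) {i : ℕ} (hi : i < n) :
    fcStep (Fin.snoc g b : Fin (n + 1) → Bool) i = fcStep g i := by
  rw [fcStep, fcStep, dif_pos (by omega), dif_pos hi]
  exact Fin.snoc_castSucc (α := fun _ => Bool) b g ⟨i, hi⟩

lemma fcStep_snoc_self (g : Fin n → Bool) (b : Bool) :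
    fcStep (Fin.snoc g b : Fin (n + 1) → Bool) n = b := by
  rw [fcStep, dif_pos (by omega)]
  exact Fin.snoc_last (α := fun _ => Bool) b g

lemma fcPos_snoc (g : Fin n → Bool) (b : Bool) :
    fcPos (Fin.snoc g b : Fin (n + 1) → Bool) (n + 1) = fcPos g n + if b then 1 else -1 := by
  rw [fcPos, sum_range_succ, fcStep_snoc_self, fcPos]
  congr 1
  exact sum_congr rfl fun j hj => by rw [fcStep_snoc_of_lt g b (mem_range.mp hj)]

lemma fcTurns_snoc (g : Fin (n + 1) → Bool) (b : Bool) :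
    fcTurns (Fin.snoc g b : Fin (n + 2) → Bool) = fcTurns g + if fcStep g n = b then 0 else 1 := by
  simp only [fcTurns, card_filter, Nat.add_sub_cancel, sum_range_succ, fcStep_snoc_self,
    fcStep_snoc_of_lt g b (Nat.lt_succ_self n), ite_not]
  congr 1
  refine sum_congr rfl fun i hi => ?_
  have hi := mem_range.mp hi
  rw [fcStep_snoc_of_lt g b (by omega), fcStep_snoc_of_lt g b (by omega)]

lemma snoc_init_of_fcStep_eq {f : Fin (n + 1) → Bool} {b : Bool} (h : fcStep f n = b) :
    (Fin.snoc (Fin.init f) b : Fin (n + 1) → Bool) = f := by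
  rw [← h, fcStep, dif_pos n.lt_succ_self]
  exact Fin.snoc_init_self f

lemma mem_fcPaths_succ {X : ℤ} {f : Fin (n + 1) → Bool} :
    f ∈ fcPaths (n + 1) X ↔ fcStep f 0 = true ∧ fcPos f (n + 1) = X := by
  simp only [fcPaths, mem_filter, mem_univ, true_and, fcStep, dif_pos n.succ_pos]
  constructor
  · exact fun ⟨h0, hX⟩ => ⟨h0 0 rfl, hX⟩
  · rintro ⟨h0, hX⟩
    exact ⟨fun i hi => (Fin.ext hi : i = 0) ▸ h0, hX⟩

lemma snoc_mem_fcPaths_iff {X : ℤ} {g : Fin (n + 1) → Bool} {b : Bool} :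
    (Fin.snoc g b : Fin (n + 2) → Bool) ∈ fcPaths (n + 2) X ↔
      g ∈ fcPaths (n + 1) (X - if b then 1 else -1) := by
  rw [mem_fcPaths_succ, mem_fcPaths_succ, fcPos_snoc, fcStep_snoc_of_lt g b n.succ_pos,
    eq_sub_iff_add_eq]

lemma abs_sum_sign_le (s : Finset ℕ) (P : ℕ → Bool) :
    |∑ j ∈ s, if P j then (1 : ℤ) else -1| ≤ s.card :=
  (abs_sum_le_sum_abs _ _).trans <| by simp [apply_ite]

lemma one_sub_le_of_mem_fcPaths {X : ℤ} {f : Fin (n + 1) → Bool} (hf : f ∈ fcPaths (n + 1) X) :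
    1 - (n : ℤ) ≤ X := by
  obtain ⟨h0, rfl⟩ := mem_fcPaths_succ.mp hf
  have := abs_le.mp (abs_sum_sign_le (range n) fun j => fcStep f (j + 1))
  rw [fcPos, sum_range_succ', h0, if_pos rfl]
  simp only [card_range] at this
  omega

lemma fcPos_le_of_fcStep_eq_false {f : Fin (n + 1) → Bool} (h : fcStep f n = false) :
    fcPos f (n + 1) ≤ n - 1 := by
  have := abs_le.mp (abs_sum_sign_le (range n) (fcStep f))
  rw [fcPos, sum_range_succ, h]
  simp only [card_range, Bool.false_eq_true, if_false] at this ⊢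
  omega

end Paths

def numCompositions : ℕ → ℕ → ℕ
  | 0, 0 => 1
  | 0, _ + 1 => 0
  | _ + 1, 0 => 0
  | q + 1, r + 1 => q.choose r

lemma numCompositions_succ_zero (q : ℕ) : numCompositions (q + 1) 0 = 0 := rfl

lemma numCompositions_succ_succ (q r : ℕ) : numCompositions (q + 1) (r + 1) = q.choose r := rfl

lemma choose_eq_numCompositions_add (q r : ℕ) :
    q.choose r = numCompositions q r + numCompositions q (r + 1) := by
  rcases q with _ | q <;> rcases r with _ | r <;>
    simp [numCompositions, Nat.choose_succ_succ, Nat.choose_eq_zero_of_lt]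

section TurnSum

variable {R : Type*} [CommSemiring R] (w : R)

def fcTurnSum (n : ℕ) (X : ℤ) (b : Bool) : R :=
  ∑ f ∈ fcPaths n X with fcStep f (n - 1) = b, w ^ fcTurns f

lemma sum_fcPaths_eq_fcTurnSum_add (n : ℕ) (X : ℤ) :
    ∑ f ∈ fcPaths n X, w ^ fcTurns f = fcTurnSum w n X true + fcTurnSum w n X false := by
  simp only [fcTurnSum, ← Bool.not_eq_true]
  exact (sum_filter_add_sum_filter_not _ _ _).symm

lemma fcTurnSum_succ_succ (n : ℕ) (X : ℤ) (b : Bool) :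
    fcTurnSum w (n + 2) X b =
      fcTurnSum w (n + 1) (X - if b then 1 else -1) b
        + w * fcTurnSum w (n + 1) (X - if b then 1 else -1) (!b) := by
  have hsnoc : fcTurnSum w (n + 2) X b =
      ∑ g ∈ fcPaths (n + 1) (X - if b then 1 else -1),
        w ^ fcTurns (Fin.snoc g b : Fin (n + 2) → Bool) := by
    refine (sum_nbij' (fun g : Fin (n + 1) → Bool => (Fin.snoc g b : Fin (n + 2) → Bool))
      (fun f : Fin (n + 2) → Bool => Fin.init f) (fun g hg => ?_) (fun f hf => ?_)
      (fun g _ => Fin.init_snoc (α := fun _ => Bool) b g) (fun f hf => ?_) fun _ _ => rfl).symm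
    · rw [mem_filter, snoc_mem_fcPaths_iff]
      exact ⟨hg, fcStep_snoc_self g b⟩
    · rw [mem_filter] at hf
      rw [← snoc_mem_fcPaths_iff, snoc_init_of_fcStep_eq hf.2]
      exact hf.1
    · exact snoc_init_of_fcStep_eq (mem_filter.mp hf).2
  rw [hsnoc, ← sum_filter_add_sum_filter_not _ fun g => fcStep g n = b, fcTurnSum, fcTurnSum,
    mul_sum]
  simp only [Nat.add_sub_cancel, fcTurns_snoc, Bool.eq_not_iff]
  congr 1
  · exact sum_congr rfl fun g hg => by rw [if_pos (mem_filter.mp hg).2, add_zero]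
  · exact sum_congr rfl fun g hg => by rw [if_neg (mem_filter.mp hg).2, pow_succ', mul_comm]

lemma fcTurnSum_one_one_true : fcTurnSum w 1 1 true = 1 := by
  have : (fcPaths 1 1).filter (fun f => fcStep f (1 - 1) = true) = {fun _ => true} := by decide
  rw [fcTurnSum, this, sum_singleton, show fcTurns (n := 1) (fun _ => true) = 0 from rfl,
    pow_zero]

lemma fcTurnSum_eq_zero_of_lt {n : ℕ} {X : ℤ} (b : Bool) (hX : X < 1 - n) :
    fcTurnSum w (n + 1) X b = 0 :=
  sum_eq_zero fun _ hf => absurd (one_sub_le_of_mem_fcPaths (mem_filter.mp hf).1) (not_le.mpr hX)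

lemma fcTurnSum_self_false (n : ℕ) : fcTurnSum w (n + 1) (n + 1) false = 0 := by
  refine sum_eq_zero fun f hf => ?_
  obtain ⟨hf, hlast⟩ := mem_filter.mp hf
  have := fcPos_le_of_fcStep_eq_false hlast
  rw [(mem_fcPaths_succ.mp hf).2] at this
  omega

theorem fcTurnSum_eq (p q : ℕ) :
    fcTurnSum w (p + 1 + q) (p + 1 - q) true =
        ∑ r ∈ range (p + 1), (p.choose r * numCompositions q r : ℕ) * w ^ (2 * r) ∧
      fcTurnSum w (p + 1 + q) (p + 1 - q) false =
        ∑ r ∈ range (p + 1), (p.choose r * numCompositions q (r + 1) : ℕ) * w ^ (2 * r + 1) := by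
  induction hn : p + q generalizing p q with
  | zero =>
    obtain ⟨rfl, rfl⟩ : p = 0 ∧ q = 0 := by omega
    simpa [numCompositions] using ⟨fcTurnSum_one_one_true w, fcTurnSum_self_false w 0⟩
  | succ n ih =>
    constructor
    · rcases p with _ | p
      · obtain rfl : q = n + 1 := by omega
        rw [show 0 + 1 + (n + 1) = n + 2 by ring, fcTurnSum_succ_succ, if_pos rfl,
          fcTurnSum_eq_zero_of_lt w _ (by push_cast; omega),
          fcTurnSum_eq_zero_of_lt w _ (by push_cast; omega)]
        simp [numCompositions]
      · obtain ⟨ihR, ihL⟩ := ih p q (by omega)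
        rw [show p + 1 + 1 + q = p + q + 2 by ring, fcTurnSum_succ_succ, if_pos rfl,
          show ((p + 1 : ℕ) : ℤ) + 1 - q - 1 = p + 1 - q by push_cast; ring,
          show p + q + 1 = p + 1 + q by ring, ihR, Bool.not_true, ihL, mul_sum]
        have := sum_choose_succ_mul (fun i _ => (numCompositions q i : R) * w ^ (2 * i)) p
        push_cast
        simp only [mul_assoc] at this ⊢
        rw [this]
        congr 1
        exact sum_congr rfl fun r _ => by ring
    · rcases q with _ | q
      · simpa [numCompositions] using fcTurnSum_self_false w p
      · obtain ⟨ihR, ihL⟩ := ih p q (by omega)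
        rw [show p + 1 + (q + 1) = p + q + 2 by ring, fcTurnSum_succ_succ, if_neg (by simp),
          show (p : ℤ) + 1 - ((q + 1 : ℕ) : ℤ) - -1 = p + 1 - q by push_cast; ring,
          show p + q + 1 = p + 1 + q by ring, ihL, Bool.not_false, ihR, mul_sum, ← sum_add_distrib]
        refine sum_congr rfl fun r _ => ?_
        rw [numCompositions_succ_succ, choose_eq_numCompositions_add q r]
        push_cast
        ring

theorem sum_fcPaths_pow_fcTurns (p q : ℕ) :
    ∑ f ∈ fcPaths (p + q + 2) (p - q), w ^ fcTurns f =
      ∑ r ∈ range (p + 1), (p.choose r * q.choose r : ℕ) * w ^ (2 * r + 1) +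
        ∑ r ∈ range p, (p.choose (r + 1) * q.choose r : ℕ) * w ^ (2 * (r + 1)) := by
  obtain ⟨hR, hL⟩ := fcTurnSum_eq w p (q + 1)
  rw [sum_fcPaths_eq_fcTurnSum_add, show p + q + 2 = p + 1 + (q + 1) by ring,
    show (p : ℤ) - q = p + 1 - (q + 1 : ℕ) by push_cast; ring, hR, hL, add_comm,
    sum_range_succ' (fun r => ((p.choose r * numCompositions (q + 1) r : ℕ) : R) * w ^ (2 * r))]
  simp only [numCompositions_succ_succ, numCompositions_succ_zero, mul_zero, Nat.cast_zero,
    zero_mul, add_zero]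

end TurnSum

lemma sum_range_eq_sum_range_of_eq_zero {M : Type*} [AddCommMonoid M] {f : ℕ → M} {N a b : ℕ}
    (hf : ∀ r ≥ N, f r = 0) (ha : N ≤ a) (hb : N ≤ b) :
    ∑ r ∈ range a, f r = ∑ r ∈ range b, f r :=
  (eventually_constant_sum hf ha).trans (eventually_constant_sum hf hb).symm

open Complex in
lemma fcAmp_eq (m ε : ℝ) (p q : ℕ) :
    fcAmp m ε (p - q) (p + q + 2) =
      (((1 + m ^ 2 * ε ^ 2) ^ ((1 - ((p + q + 2 : ℕ) : ℝ)) / 2) : ℝ) : ℂ) *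
        (((∑ r ∈ range (p + 1), (-1) ^ r * (p.choose r : ℝ) * q.choose r * (m * ε) ^ (2 * r + 1)
          : ℝ) : ℂ) + ((∑ r ∈ range p, (-1) ^ (r + 1) * (p.choose (r + 1) : ℝ) * q.choose r
            * (m * ε) ^ (2 * (r + 1)) : ℝ) : ℂ) * I) := by
  have hI : (-I) ^ 2 = -1 := by rw [neg_sq, I_sq]
  rw [fcAmp, sum_fcPaths_pow_fcTurns, mul_assoc, mul_add, mul_sum, mul_sum]
  push_cast
  rw [sum_mul]
  congr 2 <;> refine sum_congr rfl fun r _ => ?_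
  · rw [mul_pow, pow_succ, pow_mul, hI]
    ring_nf
    rw [I_sq]
    ring
  · rw [mul_pow, pow_mul, hI]
    ring

theorem stmt15_general (m ε : ℝ) (X : ℤ) (n : ℕ)
    (hlt : |X| < (n : ℤ)) (heven : Even (X + (n : ℤ))) :
    (fcAmp m ε X n).re
        = (1 + m ^ 2 * ε ^ 2) ^ ((1 - (n : ℝ)) / 2) *
            ∑ r ∈ Finset.range ((n - X.natAbs) / 2 + 1),
              (-1 : ℝ) ^ r * (Nat.choose ((((n : ℤ) + X - 2) / 2).toNat) r)
                * (Nat.choose ((((n : ℤ) - X - 2) / 2).toNat) r) * (m * ε) ^ (2 * r + 1) ∧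
    (fcAmp m ε X n).im
        = (1 + m ^ 2 * ε ^ 2) ^ ((1 - (n : ℝ)) / 2) *
            ∑ r ∈ Finset.Icc 1 ((n - X.natAbs) / 2),
              (-1 : ℝ) ^ r * (Nat.choose ((((n : ℤ) + X - 2) / 2).toNat) r)
                * (Nat.choose ((((n : ℤ) - X - 2) / 2).toNat) (r - 1)) * (m * ε) ^ (2 * r)
    := by
  obtain ⟨p, q, rfl, rfl⟩ : ∃ p q : ℕ, X = p - q ∧ n = p + q + 2 := by
    obtain ⟨k, hk⟩ := heven
    have := abs_lt.mp hlt
    exact ⟨(k - 1).toNat, (n - k - 1).toNat, by omega, by omega⟩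
  have hp : ((((p + q + 2 : ℕ) : ℤ) + (p - q) - 2) / 2).toNat = p := by omega
  have hq : ((((p + q + 2 : ℕ) : ℤ) - (p - q) - 2) / 2).toNat = q := by omega
  have hK : (p + q + 2 - ((p : ℤ) - q).natAbs) / 2 = min p q + 1 := by omega
  rw [fcAmp_eq, hp, hq, hK, ← Finset.Ico_add_one_right_eq_Icc, sum_Ico_eq_sum_range,
    Nat.add_sub_cancel]
  simp only [Complex.re_ofReal_mul, Complex.im_ofReal_mul, Complex.add_re, Complex.add_im,
    Complex.ofReal_re, Complex.ofReal_im, Complex.mul_I_re, Complex.mul_I_im, neg_zero, add_zero,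
    zero_add]
  refine ⟨congr_arg _ ?_, congr_arg _ ?_⟩
  · refine sum_range_eq_sum_range_of_eq_zero (N := min p q + 1) (fun r hr => ?_) (by omega)
      (by omega)
    rcases le_total p q with h | h
    · simp [Nat.choose_eq_zero_of_lt (by omega : p < r)]
    · simp [Nat.choose_eq_zero_of_lt (by omega : q < r)]
  · simp only [add_comm 1, Nat.add_sub_cancel]
    refine sum_range_eq_sum_range_of_eq_zero (N := min p (q + 1)) (fun r hr => ?_) (by omega)
      (by omega)
    rcases le_total p (q + 1) with h | h
    · simp [Nat.choose_eq_zero_of_lt (by omega : p < r + 1)]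
    · simp [Nat.choose_eq_zero_of_lt (by omega : q < r)]

/-- Explicit formulae for `a₁` and `a₂` at a lattice point `(x,t) = (εX, εn)` with
`t > |x|` and `(x+t)/ε` even. Here `(t+x−2ε)/2ε = (n+X−2)/2`, `(t−x−2ε)/2ε = (n−X−2)/2`
and `(t−|x|)/2ε = (n−|X|)/2`. -/
theorem stmt15 (m ε : ℝ) (hε : 0 < ε) (hm : 0 ≤ m) (X : ℤ) (n : ℕ)
    (hlt : |X| < (n : ℤ)) (heven : Even (X + (n : ℤ))) :
    (fcAmp m ε X n).re
        = (1 + m ^ 2 * ε ^ 2) ^ ((1 - (n : ℝ)) / 2) *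
            ∑ r ∈ Finset.range ((n - X.natAbs) / 2 + 1),
              (-1 : ℝ) ^ r * (Nat.choose ((((n : ℤ) + X - 2) / 2).toNat) r)
                * (Nat.choose ((((n : ℤ) - X - 2) / 2).toNat) r) * (m * ε) ^ (2 * r + 1) ∧
    (fcAmp m ε X n).im
        = (1 + m ^ 2 * ε ^ 2) ^ ((1 - (n : ℝ)) / 2) *
            ∑ r ∈ Finset.Icc 1 ((n - X.natAbs) / 2),
              (-1 : ℝ) ^ r * (Nat.choose ((((n : ℤ) + X - 2) / 2).toNat) r)
                * (Nat.choose ((((n : ℤ) - X - 2) / 2).toNat) (r - 1)) * (m * ε) ^ (2 * r) :=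
  stmt15_general m ε X n hlt heven
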